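/- arXiv:2010.11637 — 3 statements merged into one kernel-verified Lean document; each statement's English description precedes it below -/
import Mathlib

section
/- Assume Q_f = P. Define u* in closed loop by u*_t = −(R + BᵀPB)⁻¹ Bᵀ (P A x*_t + ψ_t), with x* the trajectory generated by u* from x_0. Then u* is offline optimal: J(u) ≥ J(u*) for every u ∈ (ℝ^m)^T. Moreover J(u*) = Σ_{t=0}^{T−1}( w_tᵀ P w_t + 2 w_tᵀ Σ_{i=1}^{T−t−1} (Fᵀ)^i P w_{t+i} − ψ_tᵀ H ψ_t ) + x_0ᵀ P x_0 + 2 x_0ᵀ Σ_{i=0}^{T−1} (Fᵀ)^{i+1} P w_i, and for any η_0,…,η_{T−1} ∈ ℝ^n, the closed-loop control u^η with u^η_t = −(R + BᵀPB)⁻¹ Bᵀ (P A x_t + ψ_t − η_t) satisfies J(u^η) − J(u*) = Σ_{t=0}^{T−1} η_tᵀ H η_t. -/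
open Matrix

noncomputable def evNorm {n : ℕ} (x : Fin n → ℝ) : ℝ := Real.sqrt (∑ i, x i ^ 2)

noncomputable def specNorm {n m : ℕ} (M : Matrix (Fin n) (Fin m) ℝ) : ℝ :=
  sSup {c : ℝ | ∃ x : Fin m → ℝ, evNorm x ≤ 1 ∧ c = evNorm (M *ᵥ x)}

noncomputable def lambdaMin {n : ℕ} (M : Matrix (Fin n) (Fin n) ℝ) : ℝ :=
  sInf {c : ℝ | ∃ x : Fin n → ℝ, evNorm x = 1 ∧ c = x ⬝ᵥ (M *ᵥ x)}

noncomputable def specRad {n : ℕ} (M : Matrix (Fin n) (Fin n) ℝ) : ENNReal :=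
  spectralRadius ℂ (M.map Complex.ofReal)

noncomputable def seqState {n m : ℕ} (A : Matrix (Fin n) (Fin n) ℝ)
    (B : Matrix (Fin n) (Fin m) ℝ) (x0 : Fin n → ℝ)
    (u : ℕ → Fin m → ℝ) (w : ℕ → Fin n → ℝ) : ℕ → Fin n → ℝ
  | 0 => x0
  | t + 1 => A *ᵥ seqState A B x0 u w t + B *ᵥ u t + w t

noncomputable def trajCost {n m : ℕ} (A : Matrix (Fin n) (Fin n) ℝ)
    (B : Matrix (Fin n) (Fin m) ℝ) (Q : Matrix (Fin n) (Fin n) ℝ)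
    (R : Matrix (Fin m) (Fin m) ℝ) (Qf : Matrix (Fin n) (Fin n) ℝ)
    (x0 : Fin n → ℝ) (w : ℕ → Fin n → ℝ) (T : ℕ) (u : ℕ → Fin m → ℝ) : ℝ :=
  (∑ t ∈ Finset.range T,
      (seqState A B x0 u w t ⬝ᵥ (Q *ᵥ seqState A B x0 u w t) + u t ⬝ᵥ (R *ᵥ u t)))
    + seqState A B x0 u w T ⬝ᵥ (Qf *ᵥ seqState A B x0 u w T)

noncomputable def mpcCost {n m : ℕ} (A : Matrix (Fin n) (Fin n) ℝ)
    (B : Matrix (Fin n) (Fin m) ℝ) (Q : Matrix (Fin n) (Fin n) ℝ)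
    (R : Matrix (Fin m) (Fin m) ℝ) (P : Matrix (Fin n) (Fin n) ℝ)
    (z : Fin n → ℝ) (what : ℕ → Fin n → ℝ) (k : ℕ) (u : Fin k → Fin m → ℝ) : ℝ :=
  trajCost A B Q R P z what k (fun t => if h : t < k then u ⟨t, h⟩ else 0)

/-!
Completing the square along the trajectory. Put `S = R + BᵀPB`, `K = S⁻¹BᵀPA`, `G = S⁻¹Bᵀ` and
`V_t(x) = xᵀPx + 2 xᵀFᵀψ_t`; recall `ψ_t = P w_t + Fᵀψ_{t+1}` and `ψ_T = 0`. The Riccati equation,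
in its closed-loop form `P = Q + KᵀRK + FᵀPF`, gives for every state `x` and control `u`
  `xᵀQx + uᵀRu + V_{t+1}(Ax + Bu + w_t) = V_t(x) + ‖u + Kx + Gψ_t‖²_S + c_t`
with `c_t = w_tᵀPw_t + 2 w_tᵀFᵀψ_{t+1} - ψ_tᵀHψ_t` independent of the control. Summing over `t`
telescopes: `J(u) = Σ_t ‖u_t + Kx_t + Gψ_t‖²_S + V_0(x_0) + Σ_t c_t`. The control `u*` makes every
square vanish, while `u^η` leaves exactly the squares `‖Gη_t‖²_S = η_tᵀHη_t`.
-/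

open Finset

section RiccatiAlgebra

variable {ι κ α : Type*} [Fintype ι] [Fintype κ] [CommRing α]

lemma Matrix.mulVec_dotProduct (N : Matrix ι κ α) (v : κ → α) (y : ι → α) :
    (N *ᵥ v) ⬝ᵥ y = v ⬝ᵥ (Nᵀ *ᵥ y) := by
  rw [dotProduct_transpose_mulVec, dotProduct_comm]

lemma Matrix.IsSymm.dotProduct_mulVec_comm {M : Matrix ι ι α} (hM : M.IsSymm) (x y : ι → α) :
    x ⬝ᵥ (M *ᵥ y) = y ⬝ᵥ (M *ᵥ x) := by
  rw [← dotProduct_transpose_mulVec, hM.eq]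

lemma Matrix.IsSymm.add_dotProduct_mulVec_add {M : Matrix ι ι α} (hM : M.IsSymm) (x y : ι → α) :
    (x + y) ⬝ᵥ (M *ᵥ (x + y)) = x ⬝ᵥ (M *ᵥ x) + 2 * (x ⬝ᵥ (M *ᵥ y)) + y ⬝ᵥ (M *ᵥ y) := by
  rw [mulVec_add, add_dotProduct, dotProduct_add, dotProduct_add, hM.dotProduct_mulVec_comm y x]
  ring

variable {A Q P F : Matrix ι ι α} {B : Matrix ι κ α} {R S : Matrix κ κ α} {K G : Matrix κ ι α}

lemma riccati_closedLoop (hS : S = R + Bᵀ * P * B) (hK : S * K = Bᵀ * P * A)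
    (hDARE : P = Q + Aᵀ * P * A - Aᵀ * P * B * K) (hF : F = A - B * K) :
    Q + Kᵀ * R * K + Fᵀ * P * F = P := by
  conv_rhs => rw [hDARE]
  rw [← sub_eq_zero]
  have : Q + Kᵀ * R * K + Fᵀ * P * F - (Q + Aᵀ * P * A - Aᵀ * P * B * K)
      = Kᵀ * (S * K - Bᵀ * P * A) := by
    simp only [hS, hF, transpose_sub, transpose_mul, Matrix.mul_sub, Matrix.sub_mul,
      Matrix.mul_add, Matrix.add_mul, Matrix.mul_assoc]
    abel
  rw [this, hK, sub_self, Matrix.mul_zero]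

lemma lqr_bellman_step (hP : P.IsSymm) (hR : R.IsSymm) (hS : S = R + Bᵀ * P * B)
    (hK : S * K = Bᵀ * P * A) (hDARE : P = Q + Aᵀ * P * A - Aᵀ * P * B * K) (hF : F = A - B * K)
    (x : ι → α) (u : κ → α) :
    x ⬝ᵥ (Q *ᵥ x) + u ⬝ᵥ (R *ᵥ u) + (A *ᵥ x + B *ᵥ u) ⬝ᵥ (P *ᵥ (A *ᵥ x + B *ᵥ u))
      = x ⬝ᵥ (P *ᵥ x) + (u + K *ᵥ x) ⬝ᵥ (S *ᵥ (u + K *ᵥ x)) := by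
  obtain ⟨a, rfl⟩ : ∃ a, u = a + -(K *ᵥ x) := ⟨u + K *ᵥ x, by abel⟩
  have hy : A *ᵥ x + B *ᵥ (a + -(K *ᵥ x)) = B *ᵥ a + F *ᵥ x := by
    simp only [hF, mulVec_add, mulVec_neg, sub_mulVec, mulVec_mulVec]; abel
  have hcross : Bᵀ * P * F - R * K = 0 :=
    calc Bᵀ * P * F - R * K = Bᵀ * P * A - S * K := by
          simp only [hS, hF, Matrix.mul_sub, Matrix.add_mul, Matrix.mul_assoc]; abel
      _ = 0 := by rw [hK, sub_self]
  calc _ = x ⬝ᵥ (Q *ᵥ x) + (a + -(K *ᵥ x)) ⬝ᵥ (R *ᵥ (a + -(K *ᵥ x)))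
          + (B *ᵥ a + F *ᵥ x) ⬝ᵥ (P *ᵥ (B *ᵥ a + F *ᵥ x)) := by rw [hy]
    _ = x ⬝ᵥ ((Q + Kᵀ * R * K + Fᵀ * P * F) *ᵥ x) + a ⬝ᵥ (S *ᵥ a)
          + 2 * (a ⬝ᵥ ((Bᵀ * P * F - R * K) *ᵥ x)) := by
      rw [hR.add_dotProduct_mulVec_add, hP.add_dotProduct_mulVec_add, hS]
      simp only [add_mulVec, sub_mulVec, dotProduct_add, dotProduct_sub, mulVec_neg,
        dotProduct_neg, neg_dotProduct, mulVec_dotProduct, ← mulVec_mulVec]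
      ring
    _ = x ⬝ᵥ (P *ᵥ x) + (a + -(K *ᵥ x) + K *ᵥ x) ⬝ᵥ (S *ᵥ (a + -(K *ᵥ x) + K *ᵥ x)) := by
      rw [riccati_closedLoop hS hK hDARE hF, hcross, zero_mulVec, dotProduct_zero, mul_zero,
        add_zero, neg_add_cancel_right]

lemma mulVec_dotProduct_mulVec_mulVec_of_mul_eq (hG : S * G = Bᵀ) (ψ : ι → α) :
    (G *ᵥ ψ) ⬝ᵥ (S *ᵥ (G *ᵥ ψ)) = ψ ⬝ᵥ ((B * G) *ᵥ ψ) := by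
  rw [mulVec_mulVec, hG, dotProduct_transpose_mulVec, mulVec_mulVec]

lemma dotProduct_mulVec_add_two_mul_eq (hS : S.IsSymm) (hG : S * G = Bᵀ) (a : κ → α)
    (ψ : ι → α) :
    a ⬝ᵥ (S *ᵥ a) + 2 * (a ⬝ᵥ (Bᵀ *ᵥ ψ))
      = (a + G *ᵥ ψ) ⬝ᵥ (S *ᵥ (a + G *ᵥ ψ)) - ψ ⬝ᵥ ((B * G) *ᵥ ψ) := by
  rw [hS.add_dotProduct_mulVec_add, mulVec_dotProduct_mulVec_mulVec_of_mul_eq hG, mulVec_mulVec,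
    hG]
  ring

lemma lqr_bellman_step_of_disturbance (hP : P.IsSymm) (hR : R.IsSymm) (hS : S = R + Bᵀ * P * B)
    (hK : S * K = Bᵀ * P * A) (hDARE : P = Q + Aᵀ * P * A - Aᵀ * P * B * K) (hF : F = A - B * K)
    (hG : S * G = Bᵀ) (x w p ψ : ι → α) (hψ : ψ = P *ᵥ w + Fᵀ *ᵥ p) (u : κ → α) :
    x ⬝ᵥ (Q *ᵥ x) + u ⬝ᵥ (R *ᵥ u)
        + ((A *ᵥ x + B *ᵥ u + w) ⬝ᵥ (P *ᵥ (A *ᵥ x + B *ᵥ u + w))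
          + 2 * ((A *ᵥ x + B *ᵥ u + w) ⬝ᵥ (Fᵀ *ᵥ p)))
      = x ⬝ᵥ (P *ᵥ x) + 2 * (x ⬝ᵥ (Fᵀ *ᵥ ψ))
        + (u + K *ᵥ x + G *ᵥ ψ) ⬝ᵥ (S *ᵥ (u + K *ᵥ x + G *ᵥ ψ))
        + (w ⬝ᵥ (P *ᵥ w) + 2 * (w ⬝ᵥ (Fᵀ *ᵥ p)) - ψ ⬝ᵥ ((B * G) *ᵥ ψ)) := by
  have hSsymm : S.IsSymm := by
    rw [hS, IsSymm, transpose_add, transpose_mul, transpose_mul, transpose_transpose, hR.eq, hP.eq,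
      Matrix.mul_assoc]
  have hy : A *ᵥ x + B *ᵥ u = F *ᵥ x + B *ᵥ (u + K *ᵥ x) := by
    simp only [hF, sub_mulVec, mulVec_add, mulVec_mulVec]; abel
  calc _ = x ⬝ᵥ (Q *ᵥ x) + u ⬝ᵥ (R *ᵥ u) + (A *ᵥ x + B *ᵥ u) ⬝ᵥ (P *ᵥ (A *ᵥ x + B *ᵥ u))
          + 2 * ((A *ᵥ x + B *ᵥ u) ⬝ᵥ ψ) + (w ⬝ᵥ (P *ᵥ w) + 2 * (w ⬝ᵥ (Fᵀ *ᵥ p))) := by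
        rw [hψ, hP.add_dotProduct_mulVec_add]
        simp only [add_dotProduct, dotProduct_add]
        ring
    _ = x ⬝ᵥ (P *ᵥ x) + 2 * (x ⬝ᵥ (Fᵀ *ᵥ ψ))
          + ((u + K *ᵥ x) ⬝ᵥ (S *ᵥ (u + K *ᵥ x)) + 2 * ((u + K *ᵥ x) ⬝ᵥ (Bᵀ *ᵥ ψ)))
          + (w ⬝ᵥ (P *ᵥ w) + 2 * (w ⬝ᵥ (Fᵀ *ᵥ p))) := by
        rw [lqr_bellman_step hP hR hS hK hDARE hF, hy, add_dotProduct (F *ᵥ x),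
          mulVec_dotProduct F, mulVec_dotProduct B]
        ring
    _ = _ := by
        rw [dotProduct_mulVec_add_two_mul_eq hSsymm hG]
        ring

end RiccatiAlgebra

lemma Finset.sum_range_add_eq_of_telescoping {M : Type*} [AddCommMonoid M] (f g V : ℕ → M)
    (T : ℕ) (h : ∀ t < T, f t + V (t + 1) = V t + g t) :
    ∑ t ∈ range T, f t + V T = V 0 + ∑ t ∈ range T, g t := by
  induction T with
  | zero => simp
  | succ T ih =>
    rw [sum_range_succ, sum_range_succ, add_assoc, h T (by omega), ← add_assoc,
      ih fun t ht => h t (by omega), add_assoc]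

section BackwardSums

variable {ι α : Type*} [Fintype ι] [DecidableEq ι] [CommRing α]

lemma mulVec_sum_pow_mul_mulVec (M P : Matrix ι ι α) (v : ℕ → ι → α) (s : Finset ℕ) :
    M *ᵥ ∑ i ∈ s, (M ^ i * P) *ᵥ v i = ∑ i ∈ s, (M ^ (i + 1) * P) *ᵥ v i := by
  rw [mulVec_sum]
  refine sum_congr rfl fun i _ => ?_
  rw [mulVec_mulVec, ← Matrix.mul_assoc, pow_succ']

lemma mulVec_sum_range_sub_succ (M P : Matrix ι ι α) (v : ℕ → ι → α) (T t : ℕ) :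
    M *ᵥ ∑ i ∈ range (T - (t + 1)), (M ^ i * P) *ᵥ v (t + 1 + i)
      = ∑ i ∈ Ico 1 (T - t), (M ^ i * P) *ᵥ v (t + i) := by
  rw [mulVec_sum_pow_mul_mulVec, sum_Ico_eq_sum_range, Nat.sub_sub]
  refine sum_congr rfl fun i _ => ?_
  rw [add_comm 1 i, ← add_assoc, add_right_comm]

lemma sum_range_sub_eq_add_sum_Ico (M P : Matrix ι ι α) (v : ℕ → ι → α) {T t : ℕ} (ht : t < T) :
    ∑ i ∈ range (T - t), (M ^ i * P) *ᵥ v (t + i)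
      = P *ᵥ v t + ∑ i ∈ Ico 1 (T - t), (M ^ i * P) *ᵥ v (t + i) := by
  rw [sum_range_eq_add_Ico _ (by omega), pow_zero, Matrix.one_mul, add_zero]

end BackwardSums

lemma eq_seqState {n m : ℕ} {A : Matrix (Fin n) (Fin n) ℝ} {B : Matrix (Fin n) (Fin m) ℝ}
    {x0 : Fin n → ℝ} {u : ℕ → Fin m → ℝ} {w : ℕ → Fin n → ℝ} {x : ℕ → Fin n → ℝ}
    (hx0 : x 0 = x0) (hx : ∀ t, x (t + 1) = A *ᵥ x t + B *ᵥ u t + w t) :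
    x = seqState A B x0 u w := by
  funext t
  induction t with
  | zero => exact hx0
  | succ t ih => rw [hx t, ih]; rfl

section Trajectory

variable {n m : ℕ} {A Q P F : Matrix (Fin n) (Fin n) ℝ} {B : Matrix (Fin n) (Fin m) ℝ}
  {R S : Matrix (Fin m) (Fin m) ℝ} {K G : Matrix (Fin m) (Fin n) ℝ}

theorem trajCost_eq_sum_add (hP : P.IsSymm) (hR : R.IsSymm) (hS : S = R + Bᵀ * P * B)
    (hK : S * K = Bᵀ * P * A) (hDARE : P = Q + Aᵀ * P * A - Aᵀ * P * B * K) (hF : F = A - B * K)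
    (hG : S * G = Bᵀ) (x0 : Fin n → ℝ) (w ψ : ℕ → Fin n → ℝ) (T : ℕ) (hψT : ψ T = 0)
    (hψ : ∀ t < T, ψ t = P *ᵥ w t + Fᵀ *ᵥ ψ (t + 1)) (u : ℕ → Fin m → ℝ) :
    trajCost A B Q R P x0 w T u
      = ∑ t ∈ range T, (u t + K *ᵥ seqState A B x0 u w t + G *ᵥ ψ t)
            ⬝ᵥ (S *ᵥ (u t + K *ᵥ seqState A B x0 u w t + G *ᵥ ψ t))
        + (∑ t ∈ range T, (w t ⬝ᵥ (P *ᵥ w t) + 2 * (w t ⬝ᵥ (Fᵀ *ᵥ ψ (t + 1)))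
            - ψ t ⬝ᵥ ((B * G) *ᵥ ψ t))
          + (x0 ⬝ᵥ (P *ᵥ x0) + 2 * (x0 ⬝ᵥ (Fᵀ *ᵥ ψ 0)))) := by
  rw [trajCost]
  set x := seqState A B x0 u w
  have htel := sum_range_add_eq_of_telescoping
    (fun t => x t ⬝ᵥ (Q *ᵥ x t) + u t ⬝ᵥ (R *ᵥ u t))
    (fun t => (u t + K *ᵥ x t + G *ᵥ ψ t) ⬝ᵥ (S *ᵥ (u t + K *ᵥ x t + G *ᵥ ψ t))
      + (w t ⬝ᵥ (P *ᵥ w t) + 2 * (w t ⬝ᵥ (Fᵀ *ᵥ ψ (t + 1))) - ψ t ⬝ᵥ ((B * G) *ᵥ ψ t)))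
    (fun t => x t ⬝ᵥ (P *ᵥ x t) + 2 * (x t ⬝ᵥ (Fᵀ *ᵥ ψ t))) T fun t ht =>
      (lqr_bellman_step_of_disturbance hP hR hS hK hDARE hF hG (x t) (w t) (ψ (t + 1)) (ψ t) (hψ t ht)
        (u t)).trans (add_assoc _ _ _)
  simp only [hψT, mulVec_zero, dotProduct_zero, mul_zero, add_zero] at htel
  rw [htel, sum_add_distrib, add_comm, add_assoc]
  rfl

lemma add_mulVec_seqState_add_of_feedback {x0 : Fin n → ℝ} {w ψ η x : ℕ → Fin n → ℝ}
    {u : ℕ → Fin m → ℝ} (hx0 : x 0 = x0) (hx : ∀ t, x (t + 1) = A *ᵥ x t + B *ᵥ u t + w t)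
    (hu : ∀ t, u t = -(G *ᵥ (P *ᵥ (A *ᵥ x t) + ψ t - η t))) (t : ℕ) :
    u t + (G * (P * A)) *ᵥ seqState A B x0 u w t + G *ᵥ ψ t = G *ᵥ η t := by
  rw [← eq_seqState hx0 hx, hu t, mulVec_sub, mulVec_add, mulVec_mulVec, mulVec_mulVec,
    Matrix.mul_assoc]
  abel

end Trajectory

theorem stmt3_general (n m T : ℕ)
    (A : Matrix (Fin n) (Fin n) ℝ) (B : Matrix (Fin n) (Fin m) ℝ)
    (Q : Matrix (Fin n) (Fin n) ℝ) (R : Matrix (Fin m) (Fin m) ℝ)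
    (P : Matrix (Fin n) (Fin n) ℝ)
    (hR : R.PosDef) (hP : P.PosDef)
    (hDARE : P = Q + Aᵀ * P * A - Aᵀ * P * B * (R + Bᵀ * P * B)⁻¹ * (Bᵀ * P * A))
    (F : Matrix (Fin n) (Fin n) ℝ)
    (hF : F = A - B * ((R + Bᵀ * P * B)⁻¹ * (Bᵀ * P * A)))
    (Hmat : Matrix (Fin n) (Fin n) ℝ)
    (hHmat : Hmat = B * (R + Bᵀ * P * B)⁻¹ * Bᵀ)
    (x0 : Fin n → ℝ) (w : ℕ → Fin n → ℝ)
    (ψ : ℕ → Fin n → ℝ)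
    (hψ : ∀ t, ψ t = ∑ i ∈ Finset.range (T - t), ((Fᵀ) ^ i * P) *ᵥ w (t + i))
    (xs : ℕ → Fin n → ℝ) (us : ℕ → Fin m → ℝ)
    (hxs0 : xs 0 = x0)
    (hxs : ∀ t, xs (t + 1) = A *ᵥ xs t + B *ᵥ us t + w t)
    (hus : ∀ t, us t = -((((R + Bᵀ * P * B)⁻¹ * Bᵀ) *ᵥ (P *ᵥ (A *ᵥ xs t) + ψ t)))) :
    (∀ v : ℕ → Fin m → ℝ, trajCost A B Q R P x0 w T us ≤ trajCost A B Q R P x0 w T v) ∧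
    trajCost A B Q R P x0 w T us =
      ∑ t ∈ Finset.range T, (w t ⬝ᵥ (P *ᵥ w t)
          + 2 * (w t ⬝ᵥ ∑ i ∈ Finset.Ico 1 (T - t), ((Fᵀ) ^ i * P) *ᵥ w (t + i))
          - ψ t ⬝ᵥ (Hmat *ᵥ ψ t))
        + x0 ⬝ᵥ (P *ᵥ x0)
        + 2 * (x0 ⬝ᵥ ∑ i ∈ Finset.range T, ((Fᵀ) ^ (i + 1) * P) *ᵥ w i) ∧
    ∀ (η : ℕ → Fin n → ℝ) (x : ℕ → Fin n → ℝ) (u : ℕ → Fin m → ℝ),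
      x 0 = x0 → (∀ t, x (t + 1) = A *ᵥ x t + B *ᵥ u t + w t) →
      (∀ t, u t = -((((R + Bᵀ * P * B)⁻¹ * Bᵀ) *ᵥ (P *ᵥ (A *ᵥ x t) + ψ t - η t)))) →
      trajCost A B Q R P x0 w T u - trajCost A B Q R P x0 w T us =
        ∑ t ∈ Finset.range T, η t ⬝ᵥ (Hmat *ᵥ η t) := by
  set S := R + Bᵀ * P * B with hS
  set G := S⁻¹ * Bᵀ with hGdef
  have hSpd : S.PosDef :=
    hR.add_posSemidef (by simpa using hP.posSemidef.conjTranspose_mul_mul_same B)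
  have hG : S * G = Bᵀ :=
    mul_nonsing_inv_cancel_left _ _ ((isUnit_iff_isUnit_det S).mp hSpd.isUnit)
  have hK : S * (G * (P * A)) = Bᵀ * P * A := by
    rw [← Matrix.mul_assoc, hG, Matrix.mul_assoc]
  have hJ := trajCost_eq_sum_add (isHermitian_iff_isSymm.mp hP.isHermitian)
    (isHermitian_iff_isSymm.mp hR.isHermitian) hS hK
    (by simpa only [hGdef, Matrix.mul_assoc] using hDARE)
    (by simpa only [hGdef, Matrix.mul_assoc] using hF) hG
    x0 w ψ T (by simp [hψ]) fun t ht => by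
      rw [hψ, hψ, sum_range_sub_eq_add_sum_Ico _ _ _ ht, mulVec_sum_range_sub_succ]
  have hH : Hmat = B * G := by rw [hHmat, Matrix.mul_assoc]
  have hJus := hJ us
  rw [sum_eq_zero fun t _ => by
    rw [add_mulVec_seqState_add_of_feedback (η := 0) hxs0 hxs
      (fun t => by rw [hus t, Pi.zero_apply, sub_zero]) t, Pi.zero_apply,
      mulVec_zero, zero_dotProduct], zero_add] at hJus
  refine ⟨fun v => ?_, ?_, fun η x u hx0 hx hu => ?_⟩
  · rw [hJus, hJ v]
    exact le_add_of_nonneg_left (sum_nonneg fun t _ => hSpd.posSemidef.dotProduct_mulVec_nonneg _)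
  · rw [hJus, hH, hψ 0, mulVec_sum_pow_mul_mulVec, Nat.sub_zero, add_assoc]
    simp only [zero_add]
    congr 1
    exact sum_congr rfl fun t _ => by rw [hψ (t + 1), mulVec_sum_range_sub_succ]
  · rw [hJ u, hJus, add_sub_cancel_right, hH]
    exact sum_congr rfl fun t _ => by
      rw [add_mulVec_seqState_add_of_feedback hx0 hx hu t, mulVec_dotProduct_mulVec_mulVec_of_mul_eq hG]

theorem stmt3 (n m T : ℕ)
    (A : Matrix (Fin n) (Fin n) ℝ) (B : Matrix (Fin n) (Fin m) ℝ)
    (Q : Matrix (Fin n) (Fin n) ℝ) (R : Matrix (Fin m) (Fin m) ℝ)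
    (P : Matrix (Fin n) (Fin n) ℝ)
    (hQ : Q.PosSemidef) (hR : R.PosDef) (hP : P.PosDef)
    (hDARE : P = Q + Aᵀ * P * A - Aᵀ * P * B * (R + Bᵀ * P * B)⁻¹ * (Bᵀ * P * A))
    (F : Matrix (Fin n) (Fin n) ℝ)
    (hF : F = A - B * ((R + Bᵀ * P * B)⁻¹ * (Bᵀ * P * A)))
    (Hmat : Matrix (Fin n) (Fin n) ℝ)
    (hHmat : Hmat = B * (R + Bᵀ * P * B)⁻¹ * Bᵀ)
    (x0 : Fin n → ℝ) (w : ℕ → Fin n → ℝ)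
    (ψ : ℕ → Fin n → ℝ)
    (hψ : ∀ t, ψ t = ∑ i ∈ Finset.range (T - t), ((Fᵀ) ^ i * P) *ᵥ w (t + i))
    (xs : ℕ → Fin n → ℝ) (us : ℕ → Fin m → ℝ)
    (hxs0 : xs 0 = x0)
    (hxs : ∀ t, xs (t + 1) = A *ᵥ xs t + B *ᵥ us t + w t)
    (hus : ∀ t, us t = -((((R + Bᵀ * P * B)⁻¹ * Bᵀ) *ᵥ (P *ᵥ (A *ᵥ xs t) + ψ t)))) :
    (∀ v : ℕ → Fin m → ℝ, trajCost A B Q R P x0 w T us ≤ trajCost A B Q R P x0 w T v) ∧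
    trajCost A B Q R P x0 w T us =
      ∑ t ∈ Finset.range T, (w t ⬝ᵥ (P *ᵥ w t)
          + 2 * (w t ⬝ᵥ ∑ i ∈ Finset.Ico 1 (T - t), ((Fᵀ) ^ i * P) *ᵥ w (t + i))
          - ψ t ⬝ᵥ (Hmat *ᵥ ψ t))
        + x0 ⬝ᵥ (P *ᵥ x0)
        + 2 * (x0 ⬝ᵥ ∑ i ∈ Finset.range T, ((Fᵀ) ^ (i + 1) * P) *ᵥ w i) ∧
    ∀ (η : ℕ → Fin n → ℝ) (x : ℕ → Fin n → ℝ) (u : ℕ → Fin m → ℝ),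
      x 0 = x0 → (∀ t, x (t + 1) = A *ᵥ x t + B *ᵥ u t + w t) →
      (∀ t, u t = -((((R + Bᵀ * P * B)⁻¹ * Bᵀ) *ᵥ (P *ᵥ (A *ᵥ x t) + ψ t - η t)))) →
      trajCost A B Q R P x0 w T u - trajCost A B Q R P x0 w T us =
        ∑ t ∈ Finset.range T, η t ⬝ᵥ (Hmat *ᵥ η t) :=
  stmt3_general n m T A B Q R P hR hP hDARE F hF Hmat hHmat x0 w ψ hψ xs us hxs0 hxs hus
end

section
/- Assume the spectral radius of F satisfies ρ(F) < 1, and fix r > 0, C > 0 and x_0 ∈ ℝ^n. There exists a constant κ, depending only on A, B, Q, R, Q_f, P, r, C and ‖x_0‖ (but not on the horizon T), with the following property: for every horizon T, every disturbance sequence with ‖w_t‖ ≤ r for all t, and every η_0,…,η_{T−1} ∈ ℝ^n with ‖η_t‖ ≤ C for all t, letting u^η be the closed-loop control with u^η_t = −(R + BᵀPB)⁻¹ Bᵀ (P A x_t + ψ_t − η_t) (x the trajectory generated by u^η from x_0), letting u* = u^0, and writing J_X(·) for the cost with terminal cost matrix X, it holds that (J_{Q_f}(u^η) − J_{Q_f}(u*))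 ≤ (J_P(u^η) − J_P(u*)) + κ. -/
open Matrix

open Filter
open scoped ENNReal NNReal Matrix.Norms.Frobenius

/-!
The stage costs of `J_{Q_f}` and `J_P` coincide, so the claim is a bound on
`x_Tᵀ (Q_f - P) x_T`, uniform in `T`, along both closed loops. Each closed loop is
`x_{t+1} = F x_t + w_t - B (R + BᵀPB)⁻¹ Bᵀ (ψ_t - η_t)`. Gelfand's formula turns `ρ(F) < 1` into
`∑ ‖F^k‖ < ∞`; as the Frobenius norm is invariant under transposition, this bounds `ψ_t`
uniformly, and then the variation-of-constants formula bounds the states uniformly.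
-/

theorem summable_norm_pow_of_spectralRadius_lt_one {𝔸 : Type*} [NormedRing 𝔸]
    [NormedAlgebra ℂ 𝔸] [CompleteSpace 𝔸] {a : 𝔸} (h : spectralRadius ℂ a < 1) :
    Summable fun k => ‖a ^ k‖ := by
  obtain ⟨γ, hργ, hγ⟩ := ENNReal.lt_iff_exists_nnreal_btwn.mp h
  have hγ1 : γ < 1 := by exact_mod_cast hγ
  refine Summable.of_norm_bounded_eventually (NNReal.summable_coe.mpr
    (NNReal.summable_geometric hγ1)) ?_
  rw [Nat.cofinite_eq_atTop]
  filter_upwards [(spectrum.pow_nnnorm_pow_one_div_tendsto_nhds_spectralRadius a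
    ).eventually_lt_const hργ, eventually_ge_atTop 1] with k hk hk1
  have hk0 : (k : ℝ) ≠ 0 := Nat.cast_ne_zero.mpr (by omega)
  have : (‖a ^ k‖₊ : ℝ≥0∞) ≤ (γ : ℝ≥0∞) ^ k := by
    calc (‖a ^ k‖₊ : ℝ≥0∞) = ((‖a ^ k‖₊ : ℝ≥0∞) ^ (1 / (k : ℝ))) ^ (k : ℝ) := by
          rw [← ENNReal.rpow_mul, one_div_mul_cancel hk0, ENNReal.rpow_one]
      _ ≤ (γ : ℝ≥0∞) ^ (k : ℝ) := ENNReal.rpow_le_rpow hk.le (by positivity)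
      _ = (γ : ℝ≥0∞) ^ k := ENNReal.rpow_natCast _ k
  rw [← ENNReal.coe_pow, ENNReal.coe_le_coe] at this
  simpa using (NNReal.coe_le_coe.mpr this)

theorem Matrix.summable_norm_pow_of_specRad_lt_one {n : ℕ} {F : Matrix (Fin n) (Fin n) ℝ}
    (h : specRad F < 1) : Summable fun k => ‖F ^ k‖ := by
  have : CompleteSpace (Matrix (Fin n) (Fin n) ℂ) := FiniteDimensional.complete ℂ _
  convert summable_norm_pow_of_spectralRadius_lt_one h using 2 with k
  rw [show F.map Complex.ofReal ^ k = (F ^ k).map Complex.ofReal from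
    (map_pow Complex.ofRealHom.mapMatrix F k).symm,
    Matrix.frobenius_norm_map_eq _ _ Complex.norm_real]

section evNorm

variable {n m : ℕ}

theorem evNorm_eq_norm_toLp (x : Fin n → ℝ) : evNorm x = ‖WithLp.toLp 2 x‖ := by
  simp [evNorm, EuclideanSpace.norm_eq]

theorem evNorm_nonneg (x : Fin n → ℝ) : 0 ≤ evNorm x :=
  Real.sqrt_nonneg _

theorem evNorm_add_le (x y : Fin n → ℝ) : evNorm (x + y) ≤ evNorm x + evNorm y := by
  simpa only [evNorm_eq_norm_toLp, WithLp.toLp_add] using norm_add_le _ _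

theorem evNorm_sub_le (x y : Fin n → ℝ) : evNorm (x - y) ≤ evNorm x + evNorm y := by
  simpa only [evNorm_eq_norm_toLp, WithLp.toLp_sub] using norm_sub_le _ _

theorem evNorm_sum_le {ι : Type*} (s : Finset ι) (f : ι → Fin n → ℝ) :
    evNorm (∑ i ∈ s, f i) ≤ ∑ i ∈ s, evNorm (f i) := by
  simpa only [evNorm_eq_norm_toLp, WithLp.toLp_sum] using norm_sum_le _ _

theorem evNorm_mulVec_le (M : Matrix (Fin n) (Fin m) ℝ) (x : Fin m → ℝ) :
    evNorm (M *ᵥ x) ≤ ‖M‖ * evNorm x := by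
  simpa only [evNorm_eq_norm_toLp, ← Matrix.frobenius_norm_replicateCol (ι := Unit),
    Matrix.replicateCol_mulVec] using Matrix.frobenius_norm_mul M _

theorem abs_dotProduct_le (x y : Fin n → ℝ) : |x ⬝ᵥ y| ≤ evNorm x * evNorm y := by
  simpa only [evNorm_eq_norm_toLp, EuclideanSpace.inner_toLp_toLp, star_trivial,
    dotProduct_comm y] using abs_real_inner_le_norm (WithLp.toLp 2 x) (WithLp.toLp 2 y)

theorem abs_dotProduct_mulVec_self_le (M : Matrix (Fin n) (Fin n) ℝ) (x : Fin n → ℝ) :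
    |x ⬝ᵥ (M *ᵥ x)| ≤ ‖M‖ * evNorm x ^ 2 :=
  calc |x ⬝ᵥ (M *ᵥ x)| ≤ evNorm x * (‖M‖ * evNorm x) :=
        (abs_dotProduct_le x _).trans
          (mul_le_mul_of_nonneg_left (evNorm_mulVec_le M x) (evNorm_nonneg x))
    _ = ‖M‖ * evNorm x ^ 2 := by ring

end evNorm

section LinearRecurrence

variable {n : ℕ} {F : Matrix (Fin n) (Fin n) ℝ}

theorem eq_pow_mulVec_add_sum_of_recurrence {x d : ℕ → Fin n → ℝ}
    (hx : ∀ t, x (t + 1) = F *ᵥ x t + d t) (t : ℕ) :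
    x t = F ^ t *ᵥ x 0 + ∑ i ∈ Finset.range t, F ^ i *ᵥ d (t - 1 - i) := by
  induction t with
  | zero => simp
  | succ t ih =>
    rw [hx, ih, Finset.sum_range_succ', mulVec_add, mulVec_mulVec, ← pow_succ', mulVec_sum]
    simp only [mulVec_mulVec, ← pow_succ', pow_zero, one_mulVec, Nat.add_sub_cancel,
      Nat.sub_zero, Nat.sub_sub, add_comm 1, add_assoc]

theorem evNorm_le_of_recurrence (hF : Summable fun k => ‖F ^ k‖) {x d : ℕ → Fin n → ℝ}
    (hx : ∀ t, x (t + 1) = F *ᵥ x t + d t) {D : ℝ} (hD : 0 ≤ D) {t : ℕ}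
    (hd : ∀ s < t, evNorm (d s) ≤ D) :
    evNorm (x t) ≤ (∑' k, ‖F ^ k‖) * (evNorm (x 0) + D) := by
  have hpow : ‖F ^ t‖ ≤ ∑' k, ‖F ^ k‖ := hF.le_tsum t fun _ _ => norm_nonneg _
  have hsum : ∑ i ∈ Finset.range t, ‖F ^ i‖ ≤ ∑' k, ‖F ^ k‖ :=
    hF.sum_le_tsum _ fun _ _ => norm_nonneg _
  rw [eq_pow_mulVec_add_sum_of_recurrence hx t]
  calc _ ≤ evNorm (F ^ t *ᵥ x 0) + ∑ i ∈ Finset.range t, evNorm (F ^ i *ᵥ d (t - 1 - i)) :=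
        (evNorm_add_le _ _).trans (add_le_add_right (evNorm_sum_le _ _) _)
    _ ≤ ‖F ^ t‖ * evNorm (x 0) + ∑ i ∈ Finset.range t, ‖F ^ i‖ * D := by
        gcongr with i hi
        · exact evNorm_mulVec_le _ _
        · exact (evNorm_mulVec_le _ _).trans (mul_le_mul_of_nonneg_left
            (hd _ (by have := Finset.mem_range.mp hi; omega)) (norm_nonneg _))
    _ ≤ (∑' k, ‖F ^ k‖) * (evNorm (x 0) + D) := by
        rw [← Finset.sum_mul, mul_add]
        gcongr
        exact evNorm_nonneg _

theorem evNorm_sum_transpose_pow_mul_mulVec_le (hF : Summable fun k => ‖F ^ k‖)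
    (P : Matrix (Fin n) (Fin n) ℝ) {w : ℕ → Fin n → ℝ} {r : ℝ} (hr : 0 ≤ r) {N : ℕ}
    (hw : ∀ i < N, evNorm (w i) ≤ r) :
    evNorm (∑ i ∈ Finset.range N, (Fᵀ ^ i * P) *ᵥ w i) ≤ (∑' k, ‖F ^ k‖) * ‖P‖ * r := by
  calc _ ≤ ∑ i ∈ Finset.range N, ‖F ^ i‖ * ‖P‖ * r := by
        refine (evNorm_sum_le _ _).trans (Finset.sum_le_sum fun i hi => ?_)
        rw [← transpose_pow]
        calc _ ≤ ‖(F ^ i)ᵀ * P‖ * evNorm (w i) := evNorm_mulVec_le _ _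
          _ ≤ ‖F ^ i‖ * ‖P‖ * r := by
            rw [← Matrix.frobenius_norm_transpose (F ^ i)]
            exact mul_le_mul (Matrix.frobenius_norm_mul _ _) (hw i (Finset.mem_range.mp hi))
              (evNorm_nonneg _) (by positivity)
    _ ≤ (∑' k, ‖F ^ k‖) * ‖P‖ * r := by
        rw [← Finset.sum_mul, ← Finset.sum_mul]
        gcongr
        exact hF.sum_le_tsum _ fun _ _ => norm_nonneg _

end LinearRecurrence

section ClosedLoop

variable {n m : ℕ}

theorem seqState_eq_of_recurrence {A : Matrix (Fin n) (Fin n) ℝ} {B : Matrix (Fin n) (Fin m) ℝ}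
    {x0 : Fin n → ℝ} {u : ℕ → Fin m → ℝ} {w x : ℕ → Fin n → ℝ} (h0 : x 0 = x0)
    (hx : ∀ t, x (t + 1) = A *ᵥ x t + B *ᵥ u t + w t) :
    seqState A B x0 u w = x := by
  funext t
  induction t with
  | zero => exact h0.symm
  | succ t ih => rw [seqState, ih, hx]

theorem trajCost_sub_trajCost (A : Matrix (Fin n) (Fin n) ℝ) (B : Matrix (Fin n) (Fin m) ℝ)
    (Q : Matrix (Fin n) (Fin n) ℝ) (R : Matrix (Fin m) (Fin m) ℝ)
    (X Y : Matrix (Fin n) (Fin n) ℝ) (x0 : Fin n → ℝ) (w : ℕ → Fin n → ℝ) (T : ℕ)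
    (u : ℕ → Fin m → ℝ) :
    trajCost A B Q R X x0 w T u - trajCost A B Q R Y x0 w T u =
      seqState A B x0 u w T ⬝ᵥ ((X - Y) *ᵥ seqState A B x0 u w T) := by
  simp only [trajCost, sub_mulVec, dotProduct_sub]
  ring

theorem evNorm_closedLoop_le {A F P : Matrix (Fin n) (Fin n) ℝ} {B : Matrix (Fin n) (Fin m) ℝ}
    {L : Matrix (Fin m) (Fin n) ℝ} (hFL : F = A - B * L * P * A) (hF : Summable fun k => ‖F ^ k‖)
    {x w v : ℕ → Fin n → ℝ} {u : ℕ → Fin m → ℝ}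
    (hx : ∀ t, x (t + 1) = A *ᵥ x t + B *ᵥ u t + w t)
    (hu : ∀ t, u t = -(L *ᵥ (P *ᵥ (A *ᵥ x t) + v t))) {T : ℕ} {r V : ℝ} (hr : 0 ≤ r)
    (hV : 0 ≤ V) (hw : ∀ t < T, evNorm (w t) ≤ r) (hv : ∀ t < T, evNorm (v t) ≤ V) :
    evNorm (x T) ≤ (∑' k, ‖F ^ k‖) * (evNorm (x 0) + (r + ‖B * L‖ * V)) := by
  have hstep : ∀ t, x (t + 1) = F *ᵥ x t + (w t - (B * L) *ᵥ v t) := by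
    intro t
    rw [hx, hu, hFL]
    simp only [mulVec_neg, mulVec_add, sub_mulVec, mulVec_mulVec, Matrix.mul_assoc]
    abel
  refine evNorm_le_of_recurrence hF hstep (by positivity) fun t ht => ?_
  calc evNorm (w t - (B * L) *ᵥ v t) ≤ evNorm (w t) + ‖B * L‖ * evNorm (v t) :=
        (evNorm_sub_le _ _).trans (add_le_add_right (evNorm_mulVec_le _ _) _)
    _ ≤ r + ‖B * L‖ * V := by gcongr; exacts [hw t ht, hv t ht]

end ClosedLoop

theorem stmt9_general (n m : ℕ)
    (A : Matrix (Fin n) (Fin n) ℝ) (B : Matrix (Fin n) (Fin m) ℝ)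
    (Q : Matrix (Fin n) (Fin n) ℝ) (R : Matrix (Fin m) (Fin m) ℝ)
    (P : Matrix (Fin n) (Fin n) ℝ)
    (F : Matrix (Fin n) (Fin n) ℝ)
    (hF : F = A - B * ((R + Bᵀ * P * B)⁻¹ * (Bᵀ * P * A)))
    (Qf : Matrix (Fin n) (Fin n) ℝ)
    (hρF : specRad F < 1)
    (r C : ℝ) (hr : 0 < r) (hC : 0 < C) (x0 : Fin n → ℝ) :
    ∃ κ : ℝ, ∀ (T : ℕ) (w η : ℕ → Fin n → ℝ),
      (∀ t, t < T → evNorm (w t) ≤ r) →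
      (∀ t, t < T → evNorm (η t) ≤ C) →
      ∀ (x : ℕ → Fin n → ℝ) (u : ℕ → Fin m → ℝ) (xs : ℕ → Fin n → ℝ) (us : ℕ → Fin m → ℝ),
        x 0 = x0 → (∀ t, x (t + 1) = A *ᵥ x t + B *ᵥ u t + w t) →
        (∀ t, u t = -((((R + Bᵀ * P * B)⁻¹ * Bᵀ) *ᵥ
            (P *ᵥ (A *ᵥ x t)
              + (∑ i ∈ Finset.range (T - t), ((Fᵀ) ^ i * P) *ᵥ w (t + i)) - η t)))) →
        xs 0 = x0 → (∀ t, xs (t + 1) = A *ᵥ xs t + B *ᵥ us t + w t) →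
        (∀ t, us t = -((((R + Bᵀ * P * B)⁻¹ * Bᵀ) *ᵥ
            (P *ᵥ (A *ᵥ xs t)
              + ∑ i ∈ Finset.range (T - t), ((Fᵀ) ^ i * P) *ᵥ w (t + i))))) →
        trajCost A B Q R Qf x0 w T u - trajCost A B Q R Qf x0 w T us ≤
          trajCost A B Q R P x0 w T u - trajCost A B Q R P x0 w T us + κ := by
  set σ := ∑' k, ‖F ^ k‖
  set L := (R + Bᵀ * P * B)⁻¹ * Bᵀ
  have hσ : Summable fun k => ‖F ^ k‖ := Matrix.summable_norm_pow_of_specRad_lt_one hρF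
  have hFL : F = A - B * L * P * A := by simp only [hF, L, Matrix.mul_assoc]
  set X := σ * (evNorm x0 + (r + ‖B * L‖ * (σ * ‖P‖ * r + C)))
  refine ⟨2 * (‖Qf - P‖ * X ^ 2), fun T w η hw hη x u xs us hx0 hx hu hxs0 hxs hus => ?_⟩
  have hψ : ∀ t < T,
      evNorm (∑ i ∈ Finset.range (T - t), (Fᵀ ^ i * P) *ᵥ w (t + i)) ≤ σ * ‖P‖ * r :=
    fun t _ => evNorm_sum_transpose_pow_mul_mulVec_le hσ P hr.le fun i hi => hw _ (by omega)
  have hxT : evNorm (x T) ≤ X := by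
    simpa only [hx0] using evNorm_closedLoop_le hFL hσ hx
      (fun t => by rw [hu t, add_sub_assoc]) hr.le (by positivity) hw
      fun t ht => (evNorm_sub_le _ _).trans (add_le_add (hψ t ht) (hη t ht))
  have hxsT : evNorm (xs T) ≤ X := by
    simpa only [hxs0] using evNorm_closedLoop_le hFL hσ hxs hus hr.le (by positivity) hw
      fun t ht => (hψ t ht).trans (le_add_of_nonneg_right hC.le)
  have hquad : ∀ v, evNorm v ≤ X → |v ⬝ᵥ ((Qf - P) *ᵥ v)| ≤ ‖Qf - P‖ * X ^ 2 :=
    fun v hv => (abs_dotProduct_mulVec_self_le _ v).trans (by gcongr; exact evNorm_nonneg v)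
  have hu_terminal := trajCost_sub_trajCost A B Q R Qf P x0 w T u
  have hus_terminal := trajCost_sub_trajCost A B Q R Qf P x0 w T us
  rw [seqState_eq_of_recurrence hx0 hx] at hu_terminal
  rw [seqState_eq_of_recurrence hxs0 hxs] at hus_terminal
  obtain ⟨-, hx_upper⟩ := abs_le.mp (hquad _ hxT)
  obtain ⟨hxs_lower, -⟩ := abs_le.mp (hquad _ hxsT)
  linarith

theorem stmt9 (n m : ℕ)
    (A : Matrix (Fin n) (Fin n) ℝ) (B : Matrix (Fin n) (Fin m) ℝ)
    (Q : Matrix (Fin n) (Fin n) ℝ) (R : Matrix (Fin m) (Fin m) ℝ)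
    (P : Matrix (Fin n) (Fin n) ℝ)
    (hQ : Q.PosSemidef) (hR : R.PosDef) (hP : P.PosDef)
    (hDARE : P = Q + Aᵀ * P * A - Aᵀ * P * B * (R + Bᵀ * P * B)⁻¹ * (Bᵀ * P * A))
    (F : Matrix (Fin n) (Fin n) ℝ)
    (hF : F = A - B * ((R + Bᵀ * P * B)⁻¹ * (Bᵀ * P * A)))
    (Qf : Matrix (Fin n) (Fin n) ℝ)
    (hρF : specRad F < 1)
    (r C : ℝ) (hr : 0 < r) (hC : 0 < C) (x0 : Fin n → ℝ) :
    ∃ κ : ℝ, ∀ (T : ℕ) (w η : ℕ → Fin n → ℝ),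
      (∀ t, t < T → evNorm (w t) ≤ r) →
      (∀ t, t < T → evNorm (η t) ≤ C) →
      ∀ (x : ℕ → Fin n → ℝ) (u : ℕ → Fin m → ℝ) (xs : ℕ → Fin n → ℝ) (us : ℕ → Fin m → ℝ),
        x 0 = x0 → (∀ t, x (t + 1) = A *ᵥ x t + B *ᵥ u t + w t) →
        (∀ t, u t = -((((R + Bᵀ * P * B)⁻¹ * Bᵀ) *ᵥ
            (P *ᵥ (A *ᵥ x t)
              + (∑ i ∈ Finset.range (T - t), ((Fᵀ) ^ i * P) *ᵥ w (t + i)) - η t)))) →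
        xs 0 = x0 → (∀ t, xs (t + 1) = A *ᵥ xs t + B *ᵥ us t + w t) →
        (∀ t, us t = -((((R + Bᵀ * P * B)⁻¹ * Bᵀ) *ᵥ
            (P *ᵥ (A *ᵥ xs t)
              + ∑ i ∈ Finset.range (T - t), ((Fᵀ) ^ i * P) *ᵥ w (t + i))))) →
        trajCost A B Q R Qf x0 w T u - trajCost A B Q R Qf x0 w T us ≤
          trajCost A B Q R P x0 w T u - trajCost A B Q R P x0 w T us + κ :=
  stmt9_general n m A B Q R P F hF Qf hρF r C hr hC x0
end

section
/- Let d > k ≥ 0 and t ≥ d with t ≤ T. Suppose the controller, given predictions ŵ_{s|t} ∈ ℝ^n for s = t−d,…,t−d+k−1, forms the estimate x̂ by x̂_{t−d} = x_{t−d}, x̂_{s+1} = A x̂_s + B u_s + ŵ_{s|t} for s = t−d,…,t−d+k−1, and x̂_{s+1} = A x̂_s + B u_s for s = t−d+k,…,t−1 (where x and u are the actual states and controls of the system), and applies u_t = −(R + BᵀPB)⁻¹ Bᵀ P A x̂_t. Then u_t = −(R + BᵀPB)⁻¹ Bᵀ (P A x_t + Σ_{i=0}^{T−t−1} (Fᵀ)^i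 P w_{t+i} − η_t) with η_t = Σ_{i=0}^{k−1} P A^{d−i} e_{t−d+i|t} + Σ_{i=k}^{d−1} P A^{d−i} w_{t−d+i} + Σ_{i=0}^{T−t−1} (Fᵀ)^i P w_{t+i}, where e_{s|t} = w_s − ŵ_{s|t}. -/
/-!
Subtracting the estimator recursion from the true dynamics, the error `x - x̂` obeys
`e_{s+1} = A e_s + v_s` with `e_{t-d} = 0`, where the forcing `v_s` is the prediction error
`w_s - ŵ_{s|t}` for the first `k` steps and the full disturbance `w_s` afterwards. By
variation of constants, `P A (x_t - x̂_t)` is exactly the sum of the two error sums in `η_t`,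
and the `Fᵀ`-weighted future disturbances in `η_t` cancel against the explicit ones.
-/

open Matrix

open Finset

lemma mul_pow_sub_one_sub {M : Type*} [Monoid M] (a : M) {N i : ℕ} (h : i < N) :
    a * a ^ (N - 1 - i) = a ^ (N - i) := by
  rw [← pow_succ', show N - 1 - i + 1 = N - i by omega]

section Recurrence

variable {ι α : Type*} [Fintype ι] [DecidableEq ι] [CommRing α]

theorem Matrix.eq_pow_mulVec_add_sum_of_recurrence (A : Matrix ι ι α) {e v : ℕ → ι → α}
    {N : ℕ} (hstep : ∀ j < N, e (j + 1) = A *ᵥ e j + v j) :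
    e N = (A ^ N) *ᵥ e 0 + ∑ i ∈ range N, (A ^ (N - 1 - i)) *ᵥ v i := by
  induction N with
  | zero => simp
  | succ N ih =>
    have hA : ∀ i ∈ range N, A *ᵥ ((A ^ (N - 1 - i)) *ᵥ v i) = (A ^ (N - i)) *ᵥ v i :=
      fun i hi => by rw [mulVec_mulVec, mul_pow_sub_one_sub A (mem_range.mp hi)]
    rw [hstep N N.lt_succ_self, ih fun j hj => hstep j (by omega), sum_range_succ,
      Nat.add_sub_cancel, Nat.sub_self, pow_zero, one_mulVec, mulVec_add, mulVec_mulVec,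
      ← pow_succ', mulVec_sum, sum_congr rfl hA, add_assoc]

theorem Matrix.sub_estimate_eq_sum_of_recurrences {κ : Type*} [Fintype κ] (A : Matrix ι ι α)
    (B : Matrix ι κ α) {x xhat w what : ℕ → ι → α} {u : ℕ → κ → α} {t d k : ℕ}
    (hkd : k ≤ d) (htd : d ≤ t)
    (hx : ∀ s, x (s + 1) = A *ᵥ x s + B *ᵥ u s + w s)
    (hinit : xhat (t - d) = x (t - d))
    (hhat1 : ∀ s, t - d ≤ s → s < t - d + k →
      xhat (s + 1) = A *ᵥ xhat s + B *ᵥ u s + what s)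
    (hhat2 : ∀ s, t - d + k ≤ s → s < t → xhat (s + 1) = A *ᵥ xhat s + B *ᵥ u s) :
    x t - xhat t = ∑ i ∈ range k, (A ^ (d - 1 - i)) *ᵥ (w (t - d + i) - what (t - d + i))
      + ∑ i ∈ Ico k d, (A ^ (d - 1 - i)) *ᵥ w (t - d + i) := by
  set v : ℕ → ι → α := fun i =>
    if i < k then w (t - d + i) - what (t - d + i) else w (t - d + i)
  have hstep : ∀ j < d, x (t - d + (j + 1)) - xhat (t - d + (j + 1))
      = A *ᵥ (x (t - d + j) - xhat (t - d + j)) + v j := by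
    intro j hj
    rw [← add_assoc, hx, mulVec_sub]
    by_cases hjk : j < k
    · rw [hhat1 _ (by omega) (by omega)]
      simp only [v, if_pos hjk]
      abel
    · rw [hhat2 _ (by omega) (by omega)]
      simp only [v, if_neg hjk]
      abel
  have herr := eq_pow_mulVec_add_sum_of_recurrence
    (e := fun j => x (t - d + j) - xhat (t - d + j)) A hstep
  simp only [add_zero, Nat.sub_add_cancel htd, hinit, sub_self, mulVec_zero, zero_add] at herr
  rw [herr, ← sum_range_add_sum_Ico _ hkd]
  congr 1
  · exact sum_congr rfl fun i hi => by simp only [v, if_pos (mem_range.mp hi)]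
  · exact sum_congr rfl fun i hi => by simp only [v, if_neg (mem_Ico.mp hi).1.not_gt]

end Recurrence

theorem stmt19_general (n m T d k t : ℕ) (hkd : k < d) (htd : d ≤ t)
    (A : Matrix (Fin n) (Fin n) ℝ) (B : Matrix (Fin n) (Fin m) ℝ)
    (R : Matrix (Fin m) (Fin m) ℝ)
    (P : Matrix (Fin n) (Fin n) ℝ)
    (F : Matrix (Fin n) (Fin n) ℝ)
    (x : ℕ → Fin n → ℝ) (u : ℕ → Fin m → ℝ) (w what : ℕ → Fin n → ℝ)
    (xhat : ℕ → Fin n → ℝ)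
    (hx : ∀ s, x (s + 1) = A *ᵥ x s + B *ᵥ u s + w s)
    (hinit : xhat (t - d) = x (t - d))
    (hhat1 : ∀ s, t - d ≤ s → s < t - d + k →
      xhat (s + 1) = A *ᵥ xhat s + B *ᵥ u s + what s)
    (hhat2 : ∀ s, t - d + k ≤ s → s < t → xhat (s + 1) = A *ᵥ xhat s + B *ᵥ u s)
    (hu : u t = -((((R + Bᵀ * P * B)⁻¹ * (Bᵀ * P * A)) *ᵥ xhat t))) :
    u t = -((((R + Bᵀ * P * B)⁻¹ * Bᵀ) *ᵥ
      (P *ᵥ (A *ᵥ x t) + (∑ i ∈ Finset.range (T - t), ((Fᵀ) ^ i * P) *ᵥ w (t + i))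
        - ((∑ i ∈ Finset.range k, (P * A ^ (d - i)) *ᵥ (w (t - d + i) - what (t - d + i)))
          + (∑ i ∈ Finset.Ico k d, (P * A ^ (d - i)) *ᵥ w (t - d + i))
          + ∑ i ∈ Finset.range (T - t), ((Fᵀ) ^ i * P) *ᵥ w (t + i))))) := by
  have hPA : ∀ i < d, ∀ v : Fin n → ℝ,
      P *ᵥ (A *ᵥ ((A ^ (d - 1 - i)) *ᵥ v)) = (P * A ^ (d - i)) *ᵥ v :=
    fun i hi v => by rw [mulVec_mulVec, mulVec_mulVec, mul_assoc, mul_pow_sub_one_sub A hi]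
  have herr : P *ᵥ (A *ᵥ (x t - xhat t))
      = ∑ i ∈ range k, (P * A ^ (d - i)) *ᵥ (w (t - d + i) - what (t - d + i))
        + ∑ i ∈ Ico k d, (P * A ^ (d - i)) *ᵥ w (t - d + i) := by
    rw [sub_estimate_eq_sum_of_recurrences A B hkd.le htd hx hinit hhat1 hhat2, mulVec_add,
      mulVec_add, mulVec_sum, mulVec_sum, mulVec_sum, mulVec_sum]
    congr 1
    · exact sum_congr rfl fun i hi => hPA i ((mem_range.mp hi).trans hkd) _
    · exact sum_congr rfl fun i hi => hPA i (mem_Ico.mp hi).2 _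
  rw [← herr, add_sub_add_right_eq_sub, ← mulVec_sub, ← mulVec_sub, sub_sub_cancel, hu,
    mulVec_mulVec, mulVec_mulVec]
  simp only [Matrix.mul_assoc]

theorem stmt19 (n m T d k t : ℕ) (hkd : k < d) (htd : d ≤ t) (htT : t ≤ T)
    (A : Matrix (Fin n) (Fin n) ℝ) (B : Matrix (Fin n) (Fin m) ℝ)
    (Q : Matrix (Fin n) (Fin n) ℝ) (R : Matrix (Fin m) (Fin m) ℝ)
    (P : Matrix (Fin n) (Fin n) ℝ)
    (hQ : Q.PosSemidef) (hR : R.PosDef) (hP : P.PosDef)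
    (hDARE : P = Q + Aᵀ * P * A - Aᵀ * P * B * (R + Bᵀ * P * B)⁻¹ * (Bᵀ * P * A))
    (F : Matrix (Fin n) (Fin n) ℝ)
    (hF : F = A - B * ((R + Bᵀ * P * B)⁻¹ * (Bᵀ * P * A)))
    (x : ℕ → Fin n → ℝ) (u : ℕ → Fin m → ℝ) (w what : ℕ → Fin n → ℝ)
    (xhat : ℕ → Fin n → ℝ)
    (hx : ∀ s, x (s + 1) = A *ᵥ x s + B *ᵥ u s + w s)
    (hinit : xhat (t - d) = x (t - d))
    (hhat1 : ∀ s, t - d ≤ s → s < t - d + k →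
      xhat (s + 1) = A *ᵥ xhat s + B *ᵥ u s + what s)
    (hhat2 : ∀ s, t - d + k ≤ s → s < t → xhat (s + 1) = A *ᵥ xhat s + B *ᵥ u s)
    (hu : u t = -((((R + Bᵀ * P * B)⁻¹ * (Bᵀ * P * A)) *ᵥ xhat t))) :
    u t = -((((R + Bᵀ * P * B)⁻¹ * Bᵀ) *ᵥ
      (P *ᵥ (A *ᵥ x t) + (∑ i ∈ Finset.range (T - t), ((Fᵀ) ^ i * P) *ᵥ w (t + i))
        - ((∑ i ∈ Finset.range k, (P * A ^ (d - i)) *ᵥ (w (t - d + i) - what (t - d + i)))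
          + (∑ i ∈ Finset.Ico k d, (P * A ^ (d - i)) *ᵥ w (t - d + i))
          + ∑ i ∈ Finset.range (T - t), ((Fᵀ) ^ i * P) *ᵥ w (t + i))))) :=
  stmt19_general n m T d k t hkd htd A B R P F x u w what xhat hx hinit hhat1 hhat2 hu
end
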